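/- Let f : ℕ → ℚ be a sequence with f(i) ≠ 0 for all i ≥ 1. Define B_f(n,n) = 1 and, for k < n, B_f(n,k) = Σ_{s=1}^{n−k} (−1)^s Σ_{(k_1,…,k_s) composition of n−k into s positive parts} f!(n)/(f!(k)·f!(k_1)⋯f!(k_s)). Then for all natural numbers k ≤ n: Σ_{s=k}^{n} B_f(n,s) · C_f(s,k) = 1 if n = k, and = 0 if n > k. That is, the matrix (B_f(n,k)) is a left inverse of the matrix of F-nomial coefficients (C_f(n,k)). -/
import Mathlib


/-- The F-factorial of a rational-valued sequence: `ffact f n = ∏_{i=1}^{n} f i`. -/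
def ffact (f : ℕ → ℚ) (n : ℕ) : ℚ := ∏ i ∈ Finset.range n, f (i + 1)

/-- Compositions of `m` into `s` positive parts, as tuples `Fin s → ℕ`. -/
def comps (s m : ℕ) : Finset (Fin s → ℕ) :=
  (Finset.Nat.antidiagonalTuple s m).filter fun k => ∀ j, 1 ≤ k j

/-- The F-nomial coefficient `C_f(n,k) = f!(n)/(f!(k)·f!(n-k))`. -/
def Cf (f : ℕ → ℚ) (n k : ℕ) : ℚ := ffact f n / (ffact f k * ffact f (n - k))

/-- The candidate inverse array: `B_f(n,n) = 1` and for `k < n`,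
`B_f(n,k) = Σ_{s=1}^{n-k} (-1)^s Σ_{compositions of n-k} f!(n)/(f!(k)·f!(k₁)⋯f!(k_s))`. -/
def Bf (f : ℕ → ℚ) (n k : ℕ) : ℚ :=
  if n = k then 1 else
    ∑ s ∈ Finset.Icc 1 (n - k), (-1 : ℚ) ^ s *
      ∑ c ∈ comps s (n - k), ffact f n / (ffact f k * ∏ j, ffact f (c j))


lemma mem_comps {s m : ℕ} {c : Fin s → ℕ} :
    c ∈ comps s m ↔ (∑ i, c i = m) ∧ ∀ j, 1 ≤ c j := by
  simp [comps, Finset.Nat.mem_antidiagonalTuple]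

def Af (f : ℕ → ℚ) (s m : ℕ) : ℚ := ∑ c ∈ comps s m, ∏ j, (ffact f (c j))⁻¹

lemma Af_zero (f : ℕ → ℚ) (m : ℕ) : Af f 0 m = if m = 0 then 1 else 0 := by
  rcases Nat.eq_zero_or_pos m with h | h
  · subst h
    have : comps 0 0 = {(fun i => i.elim0 : Fin 0 → ℕ)} := by
      ext c
      simp [mem_comps, Subsingleton.elim c (fun i => i.elim0)]
    simp [Af, this]
  · have : comps 0 m = ∅ := by
      ext c; simp [mem_comps]; omega
    rw [if_neg (by omega)]
    simp [Af, this]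

lemma Af_eq_zero_of_lt (f : ℕ → ℚ) {s m : ℕ} (h : m < s) : Af f s m = 0 := by
  have : comps s m = ∅ := by
    ext c
    simp only [mem_comps, Finset.notMem_empty, iff_false, not_and]
    intro hs hpos
    have : s ≤ ∑ i, c i := by
      calc s = ∑ _i : Fin s, 1 := by simp
        _ ≤ ∑ i, c i := Finset.sum_le_sum fun i _ => hpos i
    omega
  simp [Af, this]

lemma Af_peel (f : ℕ → ℚ) (s m : ℕ) :
    Af f (s + 1) m = ∑ j ∈ Finset.Icc 1 m, (ffact f j)⁻¹ * Af f s (m - j) := by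
  unfold Af
  simp_rw [Finset.mul_sum]
  rw [← Finset.sum_sigma (Finset.Icc 1 m) (fun j => comps s (m - j))
    (fun p => (ffact f p.1)⁻¹ * ∏ j, (ffact f (p.2 j))⁻¹)]
  refine Finset.sum_nbij'
      (fun c : Fin (s+1) → ℕ => (⟨c 0, Fin.tail c⟩ : Σ _j : ℕ, Fin s → ℕ))
      (fun p : Σ _j : ℕ, Fin s → ℕ => Fin.cons p.1 p.2) ?_ ?_ ?_ ?_ ?_
  · intro c hc
    rw [mem_comps] at hc
    obtain ⟨hsum, hpos⟩ := hc
    have h0 : 1 ≤ c 0 := hpos 0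
    have hsum' : c 0 + ∑ i, Fin.tail c i = m := by
      rw [← hsum, Fin.sum_univ_succ]; rfl
    rw [Finset.mem_sigma]
    constructor
    · have hle : c 0 ≤ m := by omega
      exact Finset.mem_Icc.2 ⟨h0, hle⟩
    · rw [mem_comps]
      constructor
      · show ∑ i, Fin.tail c i = m - c 0
        omega
      · intro j; exact hpos j.succ
  · intro p hp
    obtain ⟨hp1, hp2⟩ := Finset.mem_sigma.1 hp
    rw [Finset.mem_Icc] at hp1
    rw [mem_comps] at hp2
    refine mem_comps.2 ⟨?_, ?_⟩
    · rw [Fin.sum_univ_succ]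
      simp only [Fin.cons_zero, Fin.cons_succ]
      rw [hp2.1]; omega
    · intro j
      refine Fin.cases ?_ ?_ j
      · simpa using hp1.1
      · intro i; simpa using hp2.2 i
  · intro c _; exact Fin.cons_self_tail c
  · intro p _; simp [Fin.tail_cons]
  · intro c _
    simp only
    rw [Fin.prod_univ_succ]
    simp [Fin.tail]

def gp (f : ℕ → ℚ) (m : ℕ) : ℚ :=
  ∑ s ∈ Finset.range (m + 1), (-1 : ℚ) ^ s * Af f s m

lemma gp_zero (f : ℕ → ℚ) : gp f 0 = 1 := by simp [gp, Af_zero]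

lemma gp_trunc (f : ℕ → ℚ) (t M : ℕ) (h : t < M) :
    ∑ s ∈ Finset.range M, (-1 : ℚ) ^ s * Af f s t = gp f t := by
  rw [gp]
  refine (Finset.sum_subset (Finset.range_subset_range.2 (by omega)) ?_).symm
  intro x hx hnx
  rw [Finset.mem_range] at hx hnx
  rw [Af_eq_zero_of_lt f (by omega), mul_zero]

lemma gp_rec (f : ℕ → ℚ) (m : ℕ) (hm : 1 ≤ m) :
    ∑ j ∈ Finset.range (m + 1), (ffact f j)⁻¹ * gp f (m - j) = 0 := by
  have h0 : (ffact f 0)⁻¹ = (1 : ℚ) := by simp [ffact]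
  rw [Finset.sum_range_succ']
  have key : gp f m = -∑ j ∈ Finset.Icc 1 m, (ffact f j)⁻¹ * gp f (m - j) := by
    have h1 : gp f m = ∑ s ∈ Finset.range m, (-1 : ℚ) ^ (s + 1) * Af f (s + 1) m := by
      rw [gp, Finset.sum_range_succ']
      rw [Af_zero, if_neg (by omega)]
      ring
    rw [h1]
    simp_rw [Af_peel, Finset.mul_sum]
    rw [Finset.sum_comm]
    have h2 : ∀ j ∈ Finset.Icc 1 m,
        (∑ s ∈ Finset.range m, (-1 : ℚ) ^ (s + 1) * ((ffact f j)⁻¹ * Af f s (m - j)))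
          = -((ffact f j)⁻¹ * gp f (m - j)) := by
      intro j hj
      rw [Finset.mem_Icc] at hj
      rw [← gp_trunc f (m - j) m (by omega), Finset.mul_sum, ← Finset.sum_neg_distrib]
      exact Finset.sum_congr rfl fun s _ => by ring
    rw [Finset.sum_congr rfl h2, Finset.sum_neg_distrib]
  rw [Nat.sub_zero, h0, one_mul, key, ← Finset.Ico_add_one_right_eq_Icc, Finset.sum_Ico_eq_sum_range]
  have : ∀ j ∈ Finset.range (m + 1 - 1), (ffact f (j + 1))⁻¹ * gp f (m - (j + 1))
      = (ffact f (1 + j))⁻¹ * gp f (m - (1 + j)) := by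
    intro j _; rw [add_comm 1 j]
  rw [show m + 1 - 1 = m from rfl] at *
  rw [Finset.sum_congr rfl this]
  ring

lemma ffact_ne_zero (f : ℕ → ℚ) (hf : ∀ i : ℕ, 1 ≤ i → f i ≠ 0) (n : ℕ) :
    ffact f n ≠ 0 :=
  Finset.prod_ne_zero_iff.2 fun i _ => hf (i + 1) (by omega)

lemma gp_eq_Icc (f : ℕ → ℚ) {m : ℕ} (hm : 1 ≤ m) :
    gp f m = ∑ s ∈ Finset.Icc 1 m, (-1 : ℚ) ^ s * Af f s m := by
  rw [gp]
  refine (Finset.sum_subset ?_ ?_).symm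
  · intro x hx
    rw [Finset.mem_Icc] at hx
    rw [Finset.mem_range]; omega
  · intro x hx hnx
    rw [Finset.mem_range] at hx
    rw [Finset.mem_Icc] at hnx
    have : x = 0 := by omega
    subst this
    rw [Af_zero, if_neg (by omega), mul_zero]

lemma Bf_eq (f : ℕ → ℚ) (hf : ∀ i : ℕ, 1 ≤ i → f i ≠ 0) {n k : ℕ} (hkn : k ≤ n) :
    Bf f n k = ffact f n * (ffact f k)⁻¹ * gp f (n - k) := by
  rcases eq_or_lt_of_le hkn with h | h
  · subst h
    simp [Bf, gp_zero, mul_inv_cancel₀ (ffact_ne_zero f hf k)]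
  · rw [Bf, if_neg (by omega), gp_eq_Icc f (by omega : 1 ≤ n - k), Finset.mul_sum]
    refine Finset.sum_congr rfl fun s _ => ?_
    simp only [Af, Finset.mul_sum]
    refine Finset.sum_congr rfl fun c _ => ?_
    rw [div_eq_mul_inv, mul_inv, ← Finset.prod_inv_distrib]
    ring


/-- The matrix `B_f` is a left inverse of the matrix of F-nomial coefficients:
`Σ_{s=k}^{n} B_f(n,s) · C_f(s,k) = δ_{n,k}` for all `k ≤ n`. -/
theorem Fnomial_left_inverse (f : ℕ → ℚ) (hf : ∀ i : ℕ, 1 ≤ i → f i ≠ 0)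
    (n k : ℕ) (hkn : k ≤ n) :
    (∑ s ∈ Finset.Icc k n, Bf f n s * Cf f s k) = if n = k then 1 else 0 := by
  have hne := ffact_ne_zero f hf
  have hterm : ∀ s ∈ Finset.Icc k n, Bf f n s * Cf f s k
      = ffact f n * (ffact f k)⁻¹ * ((ffact f (s - k))⁻¹ * gp f (n - s)) := by
    intro s hs
    rw [Finset.mem_Icc] at hs
    rw [Bf_eq f hf hs.2, Cf]
    have h1 := hne s
    have h2 := hne k
    have h3 := hne (s - k)
    field_simp
  rw [Finset.sum_congr rfl hterm, ← Finset.mul_sum, ← Finset.Ico_add_one_right_eq_Icc,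
    Finset.sum_Ico_eq_sum_range]
  have hix : ∀ i ∈ Finset.range (n + 1 - k), (ffact f (k + i - k))⁻¹ * gp f (n - (k + i))
      = (ffact f i)⁻¹ * gp f (n - k - i) := by
    intro i _
    rw [show k + i - k = i by omega, show n - (k + i) = n - k - i by omega]
  rw [Finset.sum_congr rfl hix]
  rcases eq_or_lt_of_le hkn with h | h
  · subst h
    rw [if_pos rfl, show k + 1 - k = 1 by omega]
    simp only [Finset.sum_range_one, Nat.sub_zero, Nat.sub_self, gp_zero, mul_one]
    rw [show ffact f 0 = 1 by simp [ffact], inv_one, mul_one]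
    exact mul_inv_cancel₀ (hne k)
  · rw [if_neg (by omega)]
    have : n + 1 - k = (n - k) + 1 := by omega
    rw [this, gp_rec f (n - k) (by omega), mul_zero]
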